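/- Let ρ_AB be a density matrix on a bipartite space with marginal ρ_B = tr_A ρ_AB. Then the supremum over all density matrices σ_B on the B-system whose kernel is contained in the kernel of ρ_B of −D(ρ_AB ‖ 1_A ⊗ σ_B) equals −D(ρ_AB ‖ 1_A ⊗ ρ_B), where D(ρ‖σ) := tr(ρ·(log ρ − log σ)) is the quantum relative entropy; that is, σ_B = ρ_B is the optimizer. -/

import Mathlib

open scoped Kronecker ComplexOrder
open Matrix

/-- Real power of a matrix via the functional calculus on the eigenvalues,
with the convention `0 ^ t = 0` (powers taken on the support). -/
noncomputable def matRpow {n : Type*} [Fintype n] [DecidableEq n]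
    (A : Matrix n n ℂ) (t : ℝ) : Matrix n n ℂ :=
  if hA : A.IsHermitian then
    (hA.eigenvectorUnitary : Matrix n n ℂ) *
      Matrix.diagonal (fun i =>
        ((if hA.eigenvalues i = 0 then (0 : ℝ) else (hA.eigenvalues i) ^ t : ℝ) : ℂ)) *
      star (hA.eigenvectorUnitary : Matrix n n ℂ)
  else 0

/-- Matrix logarithm on the support. -/
noncomputable def matLog {n : Type*} [Fintype n] [DecidableEq n]
    (A : Matrix n n ℂ) : Matrix n n ℂ :=
  if hA : A.IsHermitian then
    (hA.eigenvectorUnitary : Matrix n n ℂ) *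
      Matrix.diagonal (fun i => ((Real.log (hA.eigenvalues i) : ℝ) : ℂ)) *
      star (hA.eigenvectorUnitary : Matrix n n ℂ)
  else 0

/-- Partial trace over the first tensor factor. -/
noncomputable def trFst {a b : Type*} [Fintype a] (M : Matrix (a × b) (a × b) ℂ) :
    Matrix b b ℂ :=
  Matrix.of fun j j' => ∑ i, M (i, j) (i, j')

/-- Partial trace over the second tensor factor. -/
noncomputable def trSnd {a b : Type*} [Fintype b] (M : Matrix (a × b) (a × b) ℂ) :
    Matrix a a ℂ :=
  Matrix.of fun i i' => ∑ j, M (i, j) (i', j)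

/-- Partial trace over the third factor of a tripartite system. -/
noncomputable def trThird {a b c : Type*} [Fintype c]
    (M : Matrix (a × b × c) (a × b × c) ℂ) : Matrix (a × b) (a × b) ℂ :=
  Matrix.of fun p p' => ∑ k, M (p.1, p.2, k) (p'.1, p'.2, k)

/-- Partial trace over the second factor of a tripartite system. -/
noncomputable def trSecond {a b c : Type*} [Fintype b]
    (M : Matrix (a × b × c) (a × b × c) ℂ) : Matrix (a × c) (a × c) ℂ :=
  Matrix.of fun p p' => ∑ j, M (p.1, j, p.2) (p'.1, j, p'.2)

/-- Partial trace over the first two factors of a tripartite system. -/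
noncomputable def trFstSnd {a b c : Type*} [Fintype a] [Fintype b]
    (M : Matrix (a × b × c) (a × b × c) ℂ) : Matrix c c ℂ :=
  Matrix.of fun k k' => ∑ i, ∑ j, M (i, j, k) (i, j, k')

/-- Partial trace over the first and third factors of a tripartite system. -/
noncomputable def trFstThird {a b c : Type*} [Fintype a] [Fintype c]
    (M : Matrix (a × b × c) (a × b × c) ℂ) : Matrix b b ℂ :=
  Matrix.of fun j j' => ∑ i, ∑ k, M (i, j, k) (i, j', k)

/-- Quantum Rényi relative entropy `D_α(ρ‖σ)`. -/
noncomputable def renyiDiv {n : Type*} [Fintype n] [DecidableEq n]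
    (α : ℝ) (ρ σ : Matrix n n ℂ) : ℝ :=
  (α - 1)⁻¹ * Real.log ((matRpow ρ α * matRpow σ (1 - α)).trace.re)

/-- Sandwiched quantum Rényi divergence `D̃_α(ρ‖σ)`. -/
noncomputable def sandwichedRenyiDiv {n : Type*} [Fintype n] [DecidableEq n]
    (α : ℝ) (ρ σ : Matrix n n ℂ) : ℝ :=
  (α - 1)⁻¹ * Real.log
    ((matRpow (matRpow σ ((1 - α) / (2 * α)) * ρ * matRpow σ ((1 - α) / (2 * α))) α).trace.re)

/-- Quantum relative entropy `D(ρ‖σ)`. -/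
noncomputable def relEntropy {n : Type*} [Fintype n] [DecidableEq n]
    (ρ σ : Matrix n n ℂ) : ℝ :=
  (ρ * (matLog ρ - matLog σ)).trace.re

/-!
Since `log (1 ⊗ σ) = 1 ⊗ log σ` and `tr (ρ_AB (1 ⊗ X)) = tr (ρ_B X)`, we have
`-D(ρ_AB ‖ 1 ⊗ σ) = tr (ρ_B log σ) - tr (ρ_AB log ρ_AB)`, so the claim is Gibbs' inequality
`tr (ρ_B log σ) ≤ tr (ρ_B log ρ_B)`. Expanding both traces in eigenbases `u_j` of `ρ_B` and `v_k`
of `σ`, with eigenvalues `p_j`, `q_k`, turns it into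
`∑ c_jk p_j log q_k ≤ ∑ p_j log p_j` for the doubly stochastic matrix `c_jk = |⟪u_j, v_k⟫|²`,
which follows from `p - q ≤ p log p - p log q` (that is, `log x ≤ x - 1`). The kernel inclusion
makes `c_jk p_j = 0` whenever `q_k = 0`, where the logarithm would otherwise blow up.
-/

lemma Real.sub_le_mul_log_sub_mul_log {p q : ℝ} (hp : 0 ≤ p) (hq : 0 < q) :
    p - q ≤ p * Real.log p - p * Real.log q := by
  rcases hp.eq_or_lt with rfl | hp
  · simpa using hq.le
  have h := mul_le_mul_of_nonneg_left (Real.log_le_sub_one_of_pos (div_pos hq hp)) hp.le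
  rw [Real.log_div hq.ne' hp.ne', mul_sub, mul_sub, mul_div_cancel₀ _ hp.ne', mul_one] at h
  linarith

lemma sum_mul_log_le_of_mem_doublyStochastic {n : Type*} [Fintype n] [DecidableEq n]
    {p q : n → ℝ} {c : Matrix n n ℝ} (hc : c ∈ doublyStochastic ℝ n)
    (hp : ∀ j, 0 ≤ p j) (hq : ∀ k, 0 ≤ q k) (hpq : ∑ k, q k ≤ ∑ j, p j)
    (hsupp : ∀ j k, q k = 0 → c j k * p j = 0) :
    ∑ j, ∑ k, c j k * p j * Real.log (q k) ≤ ∑ j, p j * Real.log (p j) := by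
  have hpoint : ∀ j k, c j k * p j - c j k * q k ≤
      c j k * (p j * Real.log (p j)) - c j k * p j * Real.log (q k) := by
    intro j k
    rcases (hq k).eq_or_lt with hq0 | hqpos
    -- `log 0 = 0`, and the support hypothesis kills `c j k * p j`
    · rw [← hq0, Real.log_zero, mul_zero, mul_zero, sub_zero, sub_zero, ← mul_assoc,
        hsupp j k hq0.symm, zero_mul]
    · have := mul_le_mul_of_nonneg_left (Real.sub_le_mul_log_sub_mul_log (hp j) hqpos)
        (nonneg_of_mem_doublyStochastic hc (i := j) (j := k))
      linarith
  have hrow : ∀ (j : n) (x : ℝ), ∑ k, c j k * x = x := fun j x => by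
    rw [← Finset.sum_mul, sum_row_of_mem_doublyStochastic hc, one_mul]
  have hcol : ∑ j, ∑ k, c j k * q k = ∑ k, q k := sum_mulVec_of_mem_doublyStochastic hc
  have hsum := Finset.sum_le_sum fun j (_ : j ∈ Finset.univ) =>
    Finset.sum_le_sum fun k (_ : k ∈ Finset.univ) => hpoint j k
  simp only [Finset.sum_sub_distrib, hrow, hcol] at hsum
  linarith

section
variable {n : Type*} [Fintype n] [DecidableEq n]

lemma matLog_eq_cfc {A : Matrix n n ℂ} (hA : A.IsHermitian) : matLog A = cfc Real.log A := by
  rw [hA.cfc_eq, IsHermitian.cfc, matLog, dif_pos hA, Unitary.conjStarAlgAut_apply]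
  rfl

lemma sum_normSq_apply_of_mem_unitaryGroup {W : Matrix n n ℂ} (hW : W ∈ unitaryGroup n ℂ)
    (j : n) :
    ∑ k, Complex.normSq (W j k) = 1 := by
  have h := congr_fun₂ (mem_unitaryGroup_iff.mp hW) j j
  simp only [mul_apply, star_apply, RCLike.star_def, Complex.mul_conj, one_apply_eq] at h
  exact_mod_cast h

lemma map_normSq_mem_doublyStochastic {W : Matrix n n ℂ} (hW : W ∈ unitaryGroup n ℂ) :
    W.map Complex.normSq ∈ doublyStochastic ℝ n := by
  refine mem_doublyStochastic_iff_sum.mpr ⟨fun j k => Complex.normSq_nonneg _,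
    sum_normSq_apply_of_mem_unitaryGroup hW, fun k => ?_⟩
  simpa [star_apply] using sum_normSq_apply_of_mem_unitaryGroup (Unitary.star_mem hW) k

/-- The entries `|⟪u_j, v_k⟫|²` for the eigenvector bases `u` of `A` and `v` of `B`. -/
noncomputable def eigenOverlap {A B : Matrix n n ℂ} (hA : A.IsHermitian) (hB : B.IsHermitian) :
    Matrix n n ℝ :=
  (star (hA.eigenvectorUnitary : Matrix n n ℂ) * hB.eigenvectorUnitary).map Complex.normSq

variable {A B : Matrix n n ℂ}

lemma eigenOverlap_mem_doublyStochastic (hA : A.IsHermitian) (hB : B.IsHermitian) :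
    eigenOverlap hA hB ∈ doublyStochastic ℝ n :=
  map_normSq_mem_doublyStochastic
    (Submonoid.mul_mem _ (Unitary.star_mem hA.eigenvectorUnitary.2) hB.eigenvectorUnitary.2)

lemma eigenOverlap_self (hA : A.IsHermitian) : eigenOverlap hA hA = 1 := by
  ext j k
  simp [eigenOverlap, one_apply, apply_ite Complex.normSq]

lemma re_trace_conj_diagonal_mul_conj_diagonal (U V : Matrix n n ℂ) (p q : n → ℝ) :
    (U * diagonal (RCLike.ofReal ∘ p) * star U *
        (V * diagonal (RCLike.ofReal ∘ q) * star V)).trace.re =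
      ∑ j, ∑ k, (star U * V).map Complex.normSq j k * p j * q k := by
  set W := star U * V
  have hcycle : (U * diagonal (RCLike.ofReal ∘ p) * star U *
      (V * diagonal (RCLike.ofReal ∘ q) * star V)).trace
      = (diagonal (RCLike.ofReal ∘ p) * W * diagonal (RCLike.ofReal ∘ q) * star W).trace := by
    simp only [W, star_mul, star_star, Matrix.mul_assoc]
    rw [trace_mul_comm U]
    simp only [Matrix.mul_assoc]
  rw [hcycle]
  simp only [trace, diag_apply, mul_apply, diagonal_apply, star_apply, ite_mul, zero_mul,
    mul_ite, mul_zero, Finset.sum_ite_eq', Finset.sum_ite_eq, Finset.mem_univ, if_true, map_apply,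
    Complex.re_sum]
  refine Finset.sum_congr rfl fun j _ => Finset.sum_congr rfl fun k _ => ?_
  simp [Complex.mul_re, Complex.mul_im, Complex.normSq_apply]
  ring

lemma re_trace_cfc_mul_cfc (hA : A.IsHermitian) (hB : B.IsHermitian) (f g : ℝ → ℝ) :
    (cfc f A * cfc g B).trace.re = ∑ j, ∑ k,
      eigenOverlap hA hB j k * f (hA.eigenvalues j) * g (hB.eigenvalues k) := by
  rw [hA.cfc_eq, hB.cfc_eq, IsHermitian.cfc, IsHermitian.cfc, Unitary.conjStarAlgAut_apply,
    Unitary.conjStarAlgAut_apply, re_trace_conj_diagonal_mul_conj_diagonal]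
  rfl

lemma re_trace_mul_matLog (hA : A.IsHermitian) (hB : B.IsHermitian) :
    (A * matLog B).trace.re = ∑ j, ∑ k,
      eigenOverlap hA hB j k * hA.eigenvalues j * Real.log (hB.eigenvalues k) := by
  conv_lhs => rw [← cfc_id' ℝ A, matLog_eq_cfc hB]
  exact re_trace_cfc_mul_cfc hA hB _ _

lemma re_trace_mul_matLog_self (hA : A.IsHermitian) :
    (A * matLog A).trace.re = ∑ j, hA.eigenvalues j * Real.log (hA.eigenvalues j) := by
  simp [re_trace_mul_matLog hA hA, eigenOverlap_self, one_apply]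

lemma eigenOverlap_mul_eigenvalues_eq_zero (hA : A.IsHermitian) (hB : B.IsHermitian)
    (hker : LinearMap.ker B.mulVecLin ≤ LinearMap.ker A.mulVecLin) {j k : n}
    (hk : hB.eigenvalues k = 0) : eigenOverlap hA hB j k * hA.eigenvalues j = 0 := by
  set U := (hA.eigenvectorUnitary : Matrix n n ℂ)
  set V := (hB.eigenvectorUnitary : Matrix n n ℂ)
  have hBv : B *ᵥ (V *ᵥ Pi.single k 1) = 0 := by
    rw [hB.eigenvectorUnitary_mulVec, hB.mulVec_eigenvectorBasis, hk, zero_smul]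
  have hAv : A *ᵥ (V *ᵥ Pi.single k 1) = 0 := hker hBv
  have hdiag : star U * A = diagonal (RCLike.ofReal ∘ hA.eigenvalues) * star U := by
    rw [← hA.conjStarAlgAut_star_eigenvectorUnitary, Unitary.conjStarAlgAut_apply]
    simp [U, Matrix.mul_assoc]
  have hentry : (hA.eigenvalues j : ℂ) * (star U * V) j k = 0 := by
    have h := congr_fun (congr_arg (star U *ᵥ ·) hAv) j
    rw [mulVec_mulVec, mulVec_mulVec, hdiag, mulVec_zero, mulVec_single_one,
      col_apply, Matrix.mul_assoc, diagonal_mul] at h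
    exact h
  rcases mul_eq_zero.mp hentry with hj | hjk
  · simp [Complex.ofReal_eq_zero.mp hj]
  · simp [eigenOverlap, U, V, ← hjk]

lemma re_trace_mul_matLog_le {ρ σ : Matrix n n ℂ}
    (hρ : ρ.PosSemidef) (hσ : σ.PosSemidef) (htr : σ.trace.re ≤ ρ.trace.re)
    (hker : LinearMap.ker σ.mulVecLin ≤ LinearMap.ker ρ.mulVecLin) :
    (ρ * matLog σ).trace.re ≤ (ρ * matLog ρ).trace.re := by
  rw [re_trace_mul_matLog hρ.1 hσ.1, re_trace_mul_matLog_self hρ.1]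
  refine sum_mul_log_le_of_mem_doublyStochastic (eigenOverlap_mem_doublyStochastic hρ.1 hσ.1)
    hρ.eigenvalues_nonneg hσ.eigenvalues_nonneg ?_
    fun j k hk => eigenOverlap_mul_eigenvalues_eq_zero hρ.1 hσ.1 hker hk
  simpa [hρ.1.trace_eq_sum_eigenvalues, hσ.1.trace_eq_sum_eigenvalues] using htr

end

section
variable {ι κ : Type*} [Fintype ι] [Fintype κ]

lemma trace_trFst (ρ : Matrix (ι × κ) (ι × κ) ℂ) : (trFst ρ).trace = ρ.trace := by
  simp only [trace, diag_apply, trFst, of_apply, Fintype.sum_prod_type]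
  exact Finset.sum_comm

variable [DecidableEq ι] [DecidableEq κ]

variable (ι) in
noncomputable def oneKroneckerStarAlgHom :
    Matrix κ κ ℂ →⋆ₐ[ℂ] Matrix (ι × κ) (ι × κ) ℂ where
  toFun X := (1 : Matrix ι ι ℂ) ⊗ₖ X
  map_one' := one_kronecker_one
  map_mul' X Y := by rw [← mul_kronecker_mul, one_mul]
  map_zero' := kronecker_zero _
  map_add' := kronecker_add _
  commutes' r := by
    simp only [Algebra.algebraMap_eq_smul_one, kronecker_smul, one_kronecker_one]
  map_star' X := by
    simp only [star_eq_conjTranspose, conjTranspose_kronecker, conjTranspose_one]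

lemma matLog_one_kronecker {σ : Matrix κ κ ℂ} (hσ : σ.IsHermitian) :
    matLog ((1 : Matrix ι ι ℂ) ⊗ₖ σ) = (1 : Matrix ι ι ℂ) ⊗ₖ matLog σ := by
  have hφσ : ((1 : Matrix ι ι ℂ) ⊗ₖ σ).IsHermitian := by
    simp [IsHermitian, conjTranspose_kronecker, hσ.eq]
  rw [matLog_eq_cfc hσ, matLog_eq_cfc hφσ]
  exact ((oneKroneckerStarAlgHom ι).map_cfc Real.log σ
    (σ.finite_real_spectrum.continuousOn _) (LinearMap.continuous_of_finiteDimensional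
      (oneKroneckerStarAlgHom ι).toLinearMap) hσ.isSelfAdjoint hφσ.isSelfAdjoint).symm

variable (κ) in
/-- The isometry `v ↦ e_i ⊗ v`. -/
def singleKronecker (i : ι) : Matrix (ι × κ) κ ℂ := of fun p j => if p = (i, j) then 1 else 0

lemma trFst_eq_sum (ρ : Matrix (ι × κ) (ι × κ) ℂ) :
    trFst ρ = ∑ i : ι, (singleKronecker κ i)ᴴ * ρ * singleKronecker κ i := by
  ext j j'
  simp [trFst, singleKronecker, Matrix.sum_apply, mul_apply]

lemma one_kronecker_eq_sum (X : Matrix κ κ ℂ) :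
    (1 : Matrix ι ι ℂ) ⊗ₖ X =
      ∑ i : ι, singleKronecker κ i * X * (singleKronecker κ i)ᴴ := by
  ext ⟨i, j⟩ ⟨i', j'⟩
  by_cases h : i = i' <;>
    simp [h, singleKronecker, Matrix.sum_apply, mul_apply, one_apply, ite_and, eq_comm]

lemma trace_mul_one_kronecker (ρ : Matrix (ι × κ) (ι × κ) ℂ) (X : Matrix κ κ ℂ) :
    (ρ * ((1 : Matrix ι ι ℂ) ⊗ₖ X)).trace = (trFst ρ * X).trace := by
  simp only [one_kronecker_eq_sum, trFst_eq_sum, Matrix.mul_sum, Matrix.sum_mul, trace_sum]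
  refine Finset.sum_congr rfl fun i _ => ?_
  rw [← Matrix.mul_assoc, trace_mul_comm]
  simp only [Matrix.mul_assoc]

lemma Matrix.PosSemidef.trFst {ρ : Matrix (ι × κ) (ι × κ) ℂ} (hρ : ρ.PosSemidef) :
    (trFst ρ).PosSemidef := by
  rw [trFst_eq_sum]
  exact posSemidef_sum _ fun i _ => hρ.conjTranspose_mul_mul_same _

lemma neg_relEntropy_one_kronecker (ρ : Matrix (ι × κ) (ι × κ) ℂ) {σ : Matrix κ κ ℂ}
    (hσ : σ.IsHermitian) :
    -relEntropy ρ ((1 : Matrix ι ι ℂ) ⊗ₖ σ) =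
      (trFst ρ * matLog σ).trace.re - (ρ * matLog ρ).trace.re := by
  rw [relEntropy, matLog_one_kronecker hσ, Matrix.mul_sub, trace_sub, Complex.sub_re,
    trace_mul_one_kronecker]
  ring

end

theorem relEntropy_sup {ι κ : Type*} [Fintype ι] [DecidableEq ι] [Fintype κ] [DecidableEq κ]
    (ρ : Matrix (ι × κ) (ι × κ) ℂ) (hρ : ρ.PosSemidef) (hρ1 : ρ.trace = 1) :
    sSup {x : ℝ | ∃ σ : Matrix κ κ ℂ, σ.PosSemidef ∧ σ.trace = 1 ∧
        LinearMap.ker σ.mulVecLin ≤ LinearMap.ker (trFst ρ).mulVecLin ∧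
        x = -relEntropy ρ ((1 : Matrix ι ι ℂ) ⊗ₖ σ)} =
      -relEntropy ρ ((1 : Matrix ι ι ℂ) ⊗ₖ trFst ρ) := by
  have hρB : (trFst ρ).PosSemidef := hρ.trFst
  have hρB1 : (trFst ρ).trace = 1 := by rw [trace_trFst, hρ1]
  refine IsGreatest.csSup_eq ⟨⟨trFst ρ, hρB, hρB1, le_rfl, rfl⟩, ?_⟩
  rintro _ ⟨σ, hσ, hσ1, hker, rfl⟩
  rw [neg_relEntropy_one_kronecker ρ hσ.1, neg_relEntropy_one_kronecker ρ hρB.1]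
  exact sub_le_sub_right (re_trace_mul_matLog_le hρB hσ (by rw [hσ1, hρB1]) hker) _
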